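/- Let T = conv{A₁,A₂,A₃} ⊂ ℝ² be a triangle with affinely independent vertices whose three interior angles are all at most π/2, let D be a point in the relative interior of e₁ = [A₂,A₃] and E a point in the relative interior of e₂ = [A₁,A₃], let K = conv{E,D,A₃}, let t be a unit vector parallel to D − E, n a unit vector orthogonal to t, x_T a point of [D,E], and let β₁ > 0, β₂ > 0. Let Ψ, Υ, Θ ∈ RT × RT be the unique pairs with all three degrees of freedom zero and jump data (⟨·₁(x_T) − ·₂(x_T), n⟩, β₁⟨·₁(x_T), t⟩ − β₂⟨·₂(x_T), t⟩, div ·₁ − div ·₂) equal to (1,0,0), (0,1,0), (0,0,1) respectively, and for i = 1,2,3 let φ⁽ⁱ⁾ ∈ RT × RT be the unique pair satisfying the IFE interface conditions with N_j(φ⁽ⁱ⁾) = δ_{ij}. Then every pair (w₁,w₂) ∈ RT × RT satisfies, for s = 1,2: w_s = ⟨w₁(x_T) − w₂(x_T), n⟩·Ψ_s + (β₁⟨w₁(x_T), t⟩ − β₂⟨w₂(x_T), t⟩)·Υ_s + (div w₁ − div w₂)·Θ_s + Σᵢ Nᵢ(w)·φ⁽ⁱ⁾_s. -/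

import Mathlib

/-!
The three jumps at `x_T` and the three degrees of freedom form a linear map from the
six-dimensional space `RT × RT` to `ℝ⁶`. It sends `Ψ, Υ, Θ, φ⁽¹⁾, φ⁽²⁾, φ⁽³⁾` to the standard
basis (the interface conditions kill the jumps of the `φ⁽ⁱ⁾`), so it is onto, hence injective by
counting dimensions. Since `w` and the proposed combination have the same image, they coincide.
-/

open Real MeasureTheory RealInnerProductSpace

noncomputable section

abbrev V2 : Type := EuclideanSpace ℝ (Fin 2)

/-- The lowest-order Raviart–Thomas shape function with data `(c, b)`: `x ↦ c + b • x`
(its divergence is the constant `2 * b`). -/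
def rt (c : V2) (b : ℝ) : V2 → V2 := fun x => c + b • x

/-- Arclength line integral of a scalar function over the segment `[P, Q]`. -/
def lineInt (f : V2 → ℝ) (P Q : V2) : ℝ :=
  (∫ s in (0:ℝ)..1, f (P + s • (Q - P))) * ‖Q - P‖

/-- First degree of freedom of the piecewise pair `(φ₁, φ₂)` (with `φ₁` on `K` and `φ₂` on
`T∖K`): `N₁(φ) = (1/|e₁|)(∫_{[A₂,D]} φ₂·n₁ ds + ∫_{[D,A₃]} φ₁·n₁ ds)`. -/
def dof1 (A₂ A₃ D n₁ : V2) (c₁ : V2) (b₁ : ℝ) (c₂ : V2) (b₂ : ℝ) : ℝ :=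
  (1 / ‖A₃ - A₂‖) *
    (lineInt (fun x => ⟪rt c₂ b₂ x, n₁⟫) A₂ D + lineInt (fun x => ⟪rt c₁ b₁ x, n₁⟫) D A₃)

/-- `N₂(φ) = (1/|e₂|)(∫_{[A₁,E]} φ₂·n₂ ds + ∫_{[E,A₃]} φ₁·n₂ ds)`. -/
def dof2 (A₁ A₃ E n₂ : V2) (c₁ : V2) (b₁ : ℝ) (c₂ : V2) (b₂ : ℝ) : ℝ :=
  (1 / ‖A₃ - A₁‖) *
    (lineInt (fun x => ⟪rt c₂ b₂ x, n₂⟫) A₁ E + lineInt (fun x => ⟪rt c₁ b₁ x, n₂⟫) E A₃)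

/-- `N₃(φ) = (1/|e₃|) ∫_{[A₁,A₂]} φ₂·n₃ ds`. -/
def dof3 (A₁ A₂ n₃ : V2) (c₂ : V2) (b₂ : ℝ) : ℝ :=
  (1 / ‖A₂ - A₁‖) * lineInt (fun x => ⟪rt c₂ b₂ x, n₃⟫) A₁ A₂

/-- The IFE interface conditions for the pair `(φ₁, φ₂) = (rt c₁ b₁, rt c₂ b₂)`:
(i) `⟨φ₁(x) - φ₂(x), n⟩ = 0` on the segment `[D, E]`;
(ii) `β₁⟨φ₁(x_T), t⟩ = β₂⟨φ₂(x_T), t⟩`;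
(iii) `div φ₁ = div φ₂`. -/
def ifeCond (D E xT t n : V2) (β₁ β₂ : ℝ) (c₁ : V2) (b₁ : ℝ) (c₂ : V2) (b₂ : ℝ) : Prop :=
  (∀ x ∈ segment ℝ D E, ⟪rt c₁ b₁ x - rt c₂ b₂ x, n⟫ = 0) ∧
    β₁ * ⟪rt c₁ b₁ xT, t⟫ = β₂ * ⟪rt c₂ b₂ xT, t⟫ ∧
    2 * b₁ = 2 * b₂

theorem LinearMap.eq_sum_apply_smul_of_apply_eq_single {K M ι : Type*} [DivisionRing K]
    [AddCommGroup M] [Module K M] [FiniteDimensional K M] [Fintype ι] [DecidableEq ι]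
    (L : M →ₗ[K] ι → K) (hdim : Module.finrank K M = Fintype.card ι) (v : ι → M)
    (hv : ∀ i, L (v i) = Pi.single i 1) (w : M) :
    w = ∑ i, L w i • v i := by
  have hL : ∀ y : ι → K, L (∑ i, y i • v i) = y := fun y => by
    ext j
    simp [hv, Pi.single_apply]
  have hinj : Function.Injective L :=
    (LinearMap.injective_iff_surjective_of_finrank_eq_finrank (by simpa using hdim)).mpr
      fun y => ⟨_, hL y⟩
  exact hinj (hL (L w)).symm

def rtEval (x : V2) : V2 × ℝ →ₗ[ℝ] V2 :=
  LinearMap.fst ℝ V2 ℝ + (LinearMap.snd ℝ V2 ℝ).smulRight x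

lemma rtEval_apply (x c : V2) (b : ℝ) : rtEval x (c, b) = rt c b x := rfl

lemma rt_add (c c' : V2) (b b' : ℝ) (x : V2) : rt (c + c') (b + b') x = rt c b x + rt c' b' x :=
  (rtEval x).map_add (c, b) (c', b')

lemma rt_smul (a : ℝ) (c : V2) (b : ℝ) (x : V2) : rt (a • c) (a * b) x = a • rt c b x :=
  (rtEval x).map_smul a (c, b)

lemma lineInt_inner_rt (c m P Q : V2) (b : ℝ) :
    lineInt (fun x => ⟪rt c b x, m⟫) P Q = ⟪rt c b (midpoint ℝ P Q), m⟫ * ‖Q - P‖ := by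
  have haff : ∀ s : ℝ, ⟪rt c b (P + s • (Q - P)), m⟫ = ⟪rt c b P, m⟫ + s * (b * ⟪Q - P, m⟫) :=
    fun s => by simp only [rt, smul_add, inner_add_left, real_inner_smul_left]; ring
  have hmid : midpoint ℝ P Q = P + (2⁻¹ : ℝ) • (Q - P) := by
    rw [midpoint_eq_smul_add, invOf_eq_inv]; module
  rw [lineInt, hmid, haff]
  simp [haff, intervalIntegral.integral_add, intervalIntegral.intervalIntegrable_id]

/-- Pairs `(φ₁, φ₂) = (rt c₁ b₁, rt c₂ b₂)` of Raviart–Thomas fields, as `((c₁, b₁), (c₂, b₂))`. -/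
abbrev RTPair : Type := (V2 × ℝ) × (V2 × ℝ)

lemma finrank_rtPair : Module.finrank ℝ RTPair = 6 := by
  simp [Module.finrank_prod, finrank_euclideanSpace]

def ifeData (A₁ A₂ A₃ D E xT t n n₁ n₂ n₃ : V2) (β₁ β₂ : ℝ) : RTPair →ₗ[ℝ] Fin 6 → ℝ where
  toFun p := ![⟪rt p.1.1 p.1.2 xT - rt p.2.1 p.2.2 xT, n⟫,
    β₁ * ⟪rt p.1.1 p.1.2 xT, t⟫ - β₂ * ⟪rt p.2.1 p.2.2 xT, t⟫,
    2 * p.1.2 - 2 * p.2.2,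
    dof1 A₂ A₃ D n₁ p.1.1 p.1.2 p.2.1 p.2.2,
    dof2 A₁ A₃ E n₂ p.1.1 p.1.2 p.2.1 p.2.2,
    dof3 A₁ A₂ n₃ p.2.1 p.2.2]
  map_add' p q := by
    simp only [dof1, dof2, dof3, lineInt_inner_rt]
    ext i
    fin_cases i <;> simp [rt_add, inner_add_left, inner_sub_left] <;> ring
  map_smul' a p := by
    simp only [dof1, dof2, dof3, lineInt_inner_rt]
    ext i
    fin_cases i <;> simp [rt_smul, real_inner_smul_left, inner_sub_left] <;> ring

lemma jump_data_eq_zero_of_ifeCond {D E xT t n : V2} {β₁ β₂ : ℝ} {c₁ c₂ : V2} {b₁ b₂ : ℝ}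
    (h : ifeCond D E xT t n β₁ β₂ c₁ b₁ c₂ b₂) (hxT : xT ∈ segment ℝ D E) :
    ⟪rt c₁ b₁ xT - rt c₂ b₂ xT, n⟫ = 0 ∧ β₁ * ⟪rt c₁ b₁ xT, t⟫ - β₂ * ⟪rt c₂ b₂ xT, t⟫ = 0 ∧
      2 * b₁ - 2 * b₂ = 0 :=
  ⟨h.1 xT hxT, sub_eq_zero_of_eq h.2.1, sub_eq_zero_of_eq h.2.2⟩

theorem stmt10_general (A₁ A₂ A₃ D E t n xT n₁ n₂ n₃ : V2) (β₁ β₂ : ℝ)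
    (hxT : xT ∈ segment ℝ D E)
    -- the auxiliary pair Ψ: zero degrees of freedom, jump data (1, 0, 0)
    (Pc₁ Pc₂ : V2) (Pb₁ Pb₂ : ℝ)
    (hP1 : dof1 A₂ A₃ D n₁ Pc₁ Pb₁ Pc₂ Pb₂ = 0)
    (hP2 : dof2 A₁ A₃ E n₂ Pc₁ Pb₁ Pc₂ Pb₂ = 0)
    (hP3 : dof3 A₁ A₂ n₃ Pc₂ Pb₂ = 0)
    (hPn : ⟪rt Pc₁ Pb₁ xT - rt Pc₂ Pb₂ xT, n⟫ = 1)
    (hPt : β₁ * ⟪rt Pc₁ Pb₁ xT, t⟫ - β₂ * ⟪rt Pc₂ Pb₂ xT, t⟫ = 0)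
    (hPd : 2 * Pb₁ - 2 * Pb₂ = 0)
    -- the auxiliary pair Υ: zero degrees of freedom, jump data (0, 1, 0)
    (Uc₁ Uc₂ : V2) (Ub₁ Ub₂ : ℝ)
    (hU1 : dof1 A₂ A₃ D n₁ Uc₁ Ub₁ Uc₂ Ub₂ = 0)
    (hU2 : dof2 A₁ A₃ E n₂ Uc₁ Ub₁ Uc₂ Ub₂ = 0)
    (hU3 : dof3 A₁ A₂ n₃ Uc₂ Ub₂ = 0)
    (hUn : ⟪rt Uc₁ Ub₁ xT - rt Uc₂ Ub₂ xT, n⟫ = 0)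
    (hUt : β₁ * ⟪rt Uc₁ Ub₁ xT, t⟫ - β₂ * ⟪rt Uc₂ Ub₂ xT, t⟫ = 1)
    (hUd : 2 * Ub₁ - 2 * Ub₂ = 0)
    -- the auxiliary pair Θ: zero degrees of freedom, jump data (0, 0, 1)
    (Hc₁ Hc₂ : V2) (Hb₁ Hb₂ : ℝ)
    (hH1 : dof1 A₂ A₃ D n₁ Hc₁ Hb₁ Hc₂ Hb₂ = 0)
    (hH2 : dof2 A₁ A₃ E n₂ Hc₁ Hb₁ Hc₂ Hb₂ = 0)
    (hH3 : dof3 A₁ A₂ n₃ Hc₂ Hb₂ = 0)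
    (hHn : ⟪rt Hc₁ Hb₁ xT - rt Hc₂ Hb₂ xT, n⟫ = 0)
    (hHt : β₁ * ⟪rt Hc₁ Hb₁ xT, t⟫ - β₂ * ⟪rt Hc₂ Hb₂ xT, t⟫ = 0)
    (hHd : 2 * Hb₁ - 2 * Hb₂ = 1)
    -- the IFE basis pairs φ⁽ⁱ⁾ with N_j(φ⁽ⁱ⁾) = δᵢⱼ
    (f1c₁ f1c₂ f2c₁ f2c₂ f3c₁ f3c₂ : V2) (f1b₁ f1b₂ f2b₁ f2b₂ f3b₁ f3b₂ : ℝ)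
    (hf1 : ifeCond D E xT t n β₁ β₂ f1c₁ f1b₁ f1c₂ f1b₂)
    (hf1d1 : dof1 A₂ A₃ D n₁ f1c₁ f1b₁ f1c₂ f1b₂ = 1)
    (hf1d2 : dof2 A₁ A₃ E n₂ f1c₁ f1b₁ f1c₂ f1b₂ = 0)
    (hf1d3 : dof3 A₁ A₂ n₃ f1c₂ f1b₂ = 0)
    (hf2 : ifeCond D E xT t n β₁ β₂ f2c₁ f2b₁ f2c₂ f2b₂)
    (hf2d1 : dof1 A₂ A₃ D n₁ f2c₁ f2b₁ f2c₂ f2b₂ = 0)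
    (hf2d2 : dof2 A₁ A₃ E n₂ f2c₁ f2b₁ f2c₂ f2b₂ = 1)
    (hf2d3 : dof3 A₁ A₂ n₃ f2c₂ f2b₂ = 0)
    (hf3 : ifeCond D E xT t n β₁ β₂ f3c₁ f3b₁ f3c₂ f3b₂)
    (hf3d1 : dof1 A₂ A₃ D n₁ f3c₁ f3b₁ f3c₂ f3b₂ = 0)
    (hf3d2 : dof2 A₁ A₃ E n₂ f3c₁ f3b₁ f3c₂ f3b₂ = 0)
    (hf3d3 : dof3 A₁ A₂ n₃ f3c₂ f3b₂ = 1)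
    -- an arbitrary pair w
    (wc₁ wc₂ : V2) (wb₁ wb₂ : ℝ) :
    (∀ x, rt wc₁ wb₁ x =
        ⟪rt wc₁ wb₁ xT - rt wc₂ wb₂ xT, n⟫ • rt Pc₁ Pb₁ x +
          (β₁ * ⟪rt wc₁ wb₁ xT, t⟫ - β₂ * ⟪rt wc₂ wb₂ xT, t⟫) • rt Uc₁ Ub₁ x +
          (2 * wb₁ - 2 * wb₂) • rt Hc₁ Hb₁ x +
          (dof1 A₂ A₃ D n₁ wc₁ wb₁ wc₂ wb₂) • rt f1c₁ f1b₁ x +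
          (dof2 A₁ A₃ E n₂ wc₁ wb₁ wc₂ wb₂) • rt f2c₁ f2b₁ x +
          (dof3 A₁ A₂ n₃ wc₂ wb₂) • rt f3c₁ f3b₁ x) ∧
      ∀ x, rt wc₂ wb₂ x =
        ⟪rt wc₁ wb₁ xT - rt wc₂ wb₂ xT, n⟫ • rt Pc₂ Pb₂ x +
          (β₁ * ⟪rt wc₁ wb₁ xT, t⟫ - β₂ * ⟪rt wc₂ wb₂ xT, t⟫) • rt Uc₂ Ub₂ x +
          (2 * wb₁ - 2 * wb₂) • rt Hc₂ Hb₂ x +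
          (dof1 A₂ A₃ D n₁ wc₁ wb₁ wc₂ wb₂) • rt f1c₂ f1b₂ x +
          (dof2 A₁ A₃ E n₂ wc₁ wb₁ wc₂ wb₂) • rt f2c₂ f2b₂ x +
          (dof3 A₁ A₂ n₃ wc₂ wb₂) • rt f3c₂ f3b₂ x := by
  obtain ⟨hf1n, hf1t, hf1d⟩ := jump_data_eq_zero_of_ifeCond hf1 hxT
  obtain ⟨hf2n, hf2t, hf2d⟩ := jump_data_eq_zero_of_ifeCond hf2 hxT
  obtain ⟨hf3n, hf3t, hf3d⟩ := jump_data_eq_zero_of_ifeCond hf3 hxT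
  let L := ifeData A₁ A₂ A₃ D E xT t n n₁ n₂ n₃ β₁ β₂
  let v : Fin 6 → RTPair := ![((Pc₁, Pb₁), (Pc₂, Pb₂)), ((Uc₁, Ub₁), (Uc₂, Ub₂)),
    ((Hc₁, Hb₁), (Hc₂, Hb₂)), ((f1c₁, f1b₁), (f1c₂, f1b₂)), ((f2c₁, f2b₁), (f2c₂, f2b₂)),
    ((f3c₁, f3b₁), (f3c₂, f3b₂))]
  have hv : ∀ i, L (v i) = Pi.single i 1 := by
    intro i; ext j
    fin_cases i <;> fin_cases j <;> simp [L, v, ifeData, *]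
  have hw := L.eq_sum_apply_smul_of_apply_eq_single finrank_rtPair v hv ((wc₁, wb₁), (wc₂, wb₂))
  simp only [Fin.sum_univ_six] at hw
  refine ⟨fun x => ?_, fun x => ?_⟩
  · have := congrArg (rtEval x ∘ₗ LinearMap.fst ℝ _ _) hw
    simp only [map_add, map_smul, LinearMap.comp_apply, LinearMap.fst_apply] at this
    simpa [rtEval_apply, L, v, ifeData] using this
  · have := congrArg (rtEval x ∘ₗ LinearMap.snd ℝ _ _) hw
    simp only [map_add, map_smul, LinearMap.comp_apply, LinearMap.snd_apply] at this
    simpa [rtEval_apply, L, v, ifeData] using this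

/-- The decomposition identity (pro_decomp1) at the core of Lemma 4.7: any piecewise
Raviart–Thomas pair `w` is the combination of the auxiliary functions `Ψ, Υ, Θ` (weighted
by its jump data at `x_T`) and the IFE basis functions `φ⁽ⁱ⁾` (weighted by its degrees of
freedom). -/
theorem stmt10 (A₁ A₂ A₃ D E t n xT n₁ n₂ n₃ : V2) (β₁ β₂ : ℝ)
    (hA : AffineIndependent ℝ ![A₁, A₂, A₃])
    (hang1 : EuclideanGeometry.angle A₂ A₁ A₃ ≤ π / 2)
    (hang2 : EuclideanGeometry.angle A₁ A₂ A₃ ≤ π / 2)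
    (hang3 : EuclideanGeometry.angle A₁ A₃ A₂ ≤ π / 2)
    (hD : D ∈ openSegment ℝ A₂ A₃) (hE : E ∈ openSegment ℝ A₁ A₃)
    (ht : ‖t‖ = 1) (htpar : ∃ c : ℝ, D - E = c • t)
    (hn : ‖n‖ = 1) (hnt : ⟪n, t⟫ = 0)
    (hxT : xT ∈ segment ℝ D E)
    (hn₁ : ‖n₁‖ = 1) (hn₁e : ⟪n₁, A₃ - A₂⟫ = 0) (hn₁o : ⟪n₁, A₁ - A₂⟫ < 0)
    (hn₂ : ‖n₂‖ = 1) (hn₂e : ⟪n₂, A₃ - A₁⟫ = 0) (hn₂o : ⟪n₂, A₂ - A₁⟫ < 0)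
    (hn₃ : ‖n₃‖ = 1) (hn₃e : ⟪n₃, A₂ - A₁⟫ = 0) (hn₃o : ⟪n₃, A₃ - A₁⟫ < 0)
    (hβ₁ : 0 < β₁) (hβ₂ : 0 < β₂)
    -- the auxiliary pair Ψ: zero degrees of freedom, jump data (1, 0, 0)
    (Pc₁ Pc₂ : V2) (Pb₁ Pb₂ : ℝ)
    (hP1 : dof1 A₂ A₃ D n₁ Pc₁ Pb₁ Pc₂ Pb₂ = 0)
    (hP2 : dof2 A₁ A₃ E n₂ Pc₁ Pb₁ Pc₂ Pb₂ = 0)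
    (hP3 : dof3 A₁ A₂ n₃ Pc₂ Pb₂ = 0)
    (hPn : ⟪rt Pc₁ Pb₁ xT - rt Pc₂ Pb₂ xT, n⟫ = 1)
    (hPt : β₁ * ⟪rt Pc₁ Pb₁ xT, t⟫ - β₂ * ⟪rt Pc₂ Pb₂ xT, t⟫ = 0)
    (hPd : 2 * Pb₁ - 2 * Pb₂ = 0)
    -- the auxiliary pair Υ: zero degrees of freedom, jump data (0, 1, 0)
    (Uc₁ Uc₂ : V2) (Ub₁ Ub₂ : ℝ)
    (hU1 : dof1 A₂ A₃ D n₁ Uc₁ Ub₁ Uc₂ Ub₂ = 0)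
    (hU2 : dof2 A₁ A₃ E n₂ Uc₁ Ub₁ Uc₂ Ub₂ = 0)
    (hU3 : dof3 A₁ A₂ n₃ Uc₂ Ub₂ = 0)
    (hUn : ⟪rt Uc₁ Ub₁ xT - rt Uc₂ Ub₂ xT, n⟫ = 0)
    (hUt : β₁ * ⟪rt Uc₁ Ub₁ xT, t⟫ - β₂ * ⟪rt Uc₂ Ub₂ xT, t⟫ = 1)
    (hUd : 2 * Ub₁ - 2 * Ub₂ = 0)
    -- the auxiliary pair Θ: zero degrees of freedom, jump data (0, 0, 1)
    (Hc₁ Hc₂ : V2) (Hb₁ Hb₂ : ℝ)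
    (hH1 : dof1 A₂ A₃ D n₁ Hc₁ Hb₁ Hc₂ Hb₂ = 0)
    (hH2 : dof2 A₁ A₃ E n₂ Hc₁ Hb₁ Hc₂ Hb₂ = 0)
    (hH3 : dof3 A₁ A₂ n₃ Hc₂ Hb₂ = 0)
    (hHn : ⟪rt Hc₁ Hb₁ xT - rt Hc₂ Hb₂ xT, n⟫ = 0)
    (hHt : β₁ * ⟪rt Hc₁ Hb₁ xT, t⟫ - β₂ * ⟪rt Hc₂ Hb₂ xT, t⟫ = 0)
    (hHd : 2 * Hb₁ - 2 * Hb₂ = 1)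
    -- the IFE basis pairs φ⁽ⁱ⁾ with N_j(φ⁽ⁱ⁾) = δᵢⱼ
    (f1c₁ f1c₂ f2c₁ f2c₂ f3c₁ f3c₂ : V2) (f1b₁ f1b₂ f2b₁ f2b₂ f3b₁ f3b₂ : ℝ)
    (hf1 : ifeCond D E xT t n β₁ β₂ f1c₁ f1b₁ f1c₂ f1b₂)
    (hf1d1 : dof1 A₂ A₃ D n₁ f1c₁ f1b₁ f1c₂ f1b₂ = 1)
    (hf1d2 : dof2 A₁ A₃ E n₂ f1c₁ f1b₁ f1c₂ f1b₂ = 0)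
    (hf1d3 : dof3 A₁ A₂ n₃ f1c₂ f1b₂ = 0)
    (hf2 : ifeCond D E xT t n β₁ β₂ f2c₁ f2b₁ f2c₂ f2b₂)
    (hf2d1 : dof1 A₂ A₃ D n₁ f2c₁ f2b₁ f2c₂ f2b₂ = 0)
    (hf2d2 : dof2 A₁ A₃ E n₂ f2c₁ f2b₁ f2c₂ f2b₂ = 1)
    (hf2d3 : dof3 A₁ A₂ n₃ f2c₂ f2b₂ = 0)
    (hf3 : ifeCond D E xT t n β₁ β₂ f3c₁ f3b₁ f3c₂ f3b₂)
    (hf3d1 : dof1 A₂ A₃ D n₁ f3c₁ f3b₁ f3c₂ f3b₂ = 0)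
    (hf3d2 : dof2 A₁ A₃ E n₂ f3c₁ f3b₁ f3c₂ f3b₂ = 0)
    (hf3d3 : dof3 A₁ A₂ n₃ f3c₂ f3b₂ = 1)
    -- an arbitrary pair w
    (wc₁ wc₂ : V2) (wb₁ wb₂ : ℝ) :
    (∀ x, rt wc₁ wb₁ x =
        ⟪rt wc₁ wb₁ xT - rt wc₂ wb₂ xT, n⟫ • rt Pc₁ Pb₁ x +
          (β₁ * ⟪rt wc₁ wb₁ xT, t⟫ - β₂ * ⟪rt wc₂ wb₂ xT, t⟫) • rt Uc₁ Ub₁ x +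
          (2 * wb₁ - 2 * wb₂) • rt Hc₁ Hb₁ x +
          (dof1 A₂ A₃ D n₁ wc₁ wb₁ wc₂ wb₂) • rt f1c₁ f1b₁ x +
          (dof2 A₁ A₃ E n₂ wc₁ wb₁ wc₂ wb₂) • rt f2c₁ f2b₁ x +
          (dof3 A₁ A₂ n₃ wc₂ wb₂) • rt f3c₁ f3b₁ x) ∧
      ∀ x, rt wc₂ wb₂ x =
        ⟪rt wc₁ wb₁ xT - rt wc₂ wb₂ xT, n⟫ • rt Pc₂ Pb₂ x +
          (β₁ * ⟪rt wc₁ wb₁ xT, t⟫ - β₂ * ⟪rt wc₂ wb₂ xT, t⟫) • rt Uc₂ Ub₂ x +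
          (2 * wb₁ - 2 * wb₂) • rt Hc₂ Hb₂ x +
          (dof1 A₂ A₃ D n₁ wc₁ wb₁ wc₂ wb₂) • rt f1c₂ f1b₂ x +
          (dof2 A₁ A₃ E n₂ wc₁ wb₁ wc₂ wb₂) • rt f2c₂ f2b₂ x +
          (dof3 A₁ A₂ n₃ wc₂ wb₂) • rt f3c₂ f3b₂ x :=
  stmt10_general A₁ A₂ A₃ D E t n xT n₁ n₂ n₃ β₁ β₂ hxT Pc₁ Pc₂ Pb₁ Pb₂ hP1 hP2 hP3 hPn hPt hPd Uc₁
    Uc₂ Ub₁ Ub₂ hU1 hU2 hU3 hUn hUt hUd Hc₁ Hc₂ Hb₁ Hb₂ hH1 hH2 hH3 hHn hHt hHd f1c₁ f1c₂ f2c₁ f2c₂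
    f3c₁ f3c₂ f1b₁ f1b₂ f2b₁ f2b₂ f3b₁ f3b₂ hf1 hf1d1 hf1d2 hf1d3 hf2 hf2d1 hf2d2 hf2d3 hf3 hf3d1
    hf3d2 hf3d3 wc₁ wc₂ wb₁ wb₂
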